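/- Let f be a bicritical rational map on the Riemann sphere with critical point set C_f, and let φ be a Möbius transformation such that φ(C_f) = C_f. Then there exists a unique Möbius transformation μ such that μ ∘ f = f ∘ φ, and this μ satisfies μ(V_f) = V_f. -/

import Mathlib

open Polynomial OnePoint Function

noncomputable section

abbrev RSphere : Type := OnePoint ℂ

namespace RSphere

def mApply (a b c d : ℂ) : RSphere → RSphere := fun z =>
  match z with
  | ∞ => if c = 0 then ∞ else ((a / c : ℂ) : RSphere)
  | (x : ℂ) => if c * x + d = 0 then ∞ else (((a * x + b) / (c * x + d) : ℂ) : RSphere)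

@[simp] lemma mApply_infty (a b c d : ℂ) :
    mApply a b c d ∞ = if c = 0 then ∞ else ((a / c : ℂ) : RSphere) := rfl

@[simp] lemma mApply_coe (a b c d : ℂ) (x : ℂ) :
    mApply a b c d (x : RSphere) =
      if c * x + d = 0 then ∞ else (((a * x + b) / (c * x + d) : ℂ) : RSphere) := rfl

def IsMobius (g : RSphere → RSphere) : Prop :=
  ∃ a b c d : ℂ, a * d - b * c ≠ 0 ∧ g = mApply a b c d

lemma mApply_diag {t : ℂ} (ht : t ≠ 0) : mApply t 0 0 t = id := by
  funext z
  induction z using OnePoint.rec with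
  | infty => simp
  | coe x => simp [ht]

theorem mApply_comp (a b c d a' b' c' d' : ℂ) (h' : a' * d' - b' * c' ≠ 0) :
    mApply a b c d ∘ mApply a' b' c' d' =
      mApply (a * a' + b * c') (a * b' + b * d') (c * a' + d * c') (c * b' + d * d') := by
  funext z
  induction z using OnePoint.rec with
  | infty =>
    simp only [comp_apply, mApply_infty]
    rcases eq_or_ne c' 0 with hc' | hc'
    · have ha' : a' ≠ 0 := fun h => h' (by rw [hc', h]; ring)
      rw [if_pos hc', mApply_infty, hc']
      simp only [mul_zero, add_zero]
      rcases eq_or_ne c 0 with hc | hc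
      · rw [if_pos hc, hc, zero_mul, if_pos rfl]
      · rw [if_neg hc, if_neg (mul_ne_zero hc ha'), mul_div_mul_right _ _ ha']
    · rw [if_neg hc', mApply_coe]
      have hd : c * (a' / c') + d = (c * a' + d * c') / c' := by field_simp
      rcases eq_or_ne (c * a' + d * c') 0 with h2 | h2
      · rw [if_pos (by rw [hd, h2, zero_div]), if_pos h2]
      · rw [if_neg (by rw [hd]; exact div_ne_zero h2 hc'), if_neg h2]
        congr 1
        rw [div_eq_div_iff (by rw [hd]; exact div_ne_zero h2 hc') h2]
        field_simp
        try ring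
  | coe x =>
    simp only [comp_apply, mApply_coe]
    have key2 : (c * a' + d * c') * x + (c * b' + d * d') =
        c * (a' * x + b') + d * (c' * x + d') := by ring
    have key1 : (a * a' + b * c') * x + (a * b' + b * d') =
        a * (a' * x + b') + b * (c' * x + d') := by ring
    rcases eq_or_ne (c' * x + d') 0 with h0 | h0
    · have hne : a' * x + b' ≠ 0 := by
        intro h
        apply h'
        have hh : a' * (c' * x + d') - c' * (a' * x + b') = a' * d' - b' * c' := by ring
        rw [← hh, h0, h, mul_zero, mul_zero, sub_zero]
      rw [if_pos h0, mApply_infty]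
      rw [show (c * a' + d * c') * x + (c * b' + d * d') = c * (a' * x + b') by
        rw [key2, h0, mul_zero, add_zero]]
      rw [show (a * a' + b * c') * x + (a * b' + b * d') = a * (a' * x + b') by
        rw [key1, h0, mul_zero, add_zero]]
      rcases eq_or_ne c 0 with hc | hc
      · rw [if_pos hc, if_pos (by rw [hc, zero_mul])]
      · rw [if_neg hc, if_neg (mul_ne_zero hc hne), mul_div_mul_right _ _ hne]
    · rw [if_neg h0, mApply_coe]
      have hw : c * ((a' * x + b') / (c' * x + d')) + d =
          ((c * a' + d * c') * x + (c * b' + d * d')) / (c' * x + d') := by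
        rw [mul_div_assoc', div_add' _ _ _ h0]; congr 1; ring
      rcases eq_or_ne ((c * a' + d * c') * x + (c * b' + d * d')) 0 with h2 | h2
      · rw [if_pos (by rw [hw, h2, zero_div]), if_pos h2]
      · rw [if_neg (by rw [hw]; exact div_ne_zero h2 h0), if_neg h2]
        congr 1
        rw [div_eq_div_iff (by rw [hw]; exact div_ne_zero h2 h0) h2]
        rw [mul_div_assoc', div_add' _ _ _ h0, mul_div_assoc', div_add' _ _ _ h0, div_mul_eq_mul_div,
          mul_div_assoc', div_eq_div_iff h0 h0]
        ring

end RSphere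

namespace RSphere

lemma IsMobius.id' : IsMobius (id : RSphere → RSphere) :=
  ⟨1, 0, 0, 1, by norm_num, (mApply_diag one_ne_zero).symm⟩

lemma IsMobius.comp {g h : RSphere → RSphere} (hg : IsMobius g) (hh : IsMobius h) :
    IsMobius (g ∘ h) := by
  obtain ⟨a, b, c, d, hdet, rfl⟩ := hg
  obtain ⟨a', b', c', d', hdet', rfl⟩ := hh
  refine ⟨_, _, _, _, ?_, mApply_comp a b c d a' b' c' d' hdet'⟩
  have key : (a * a' + b * c') * (c * b' + d * d') - (a * b' + b * d') * (c * a' + d * c')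
      = (a * d - b * c) * (a' * d' - b' * c') := by ring
  rw [key]
  exact mul_ne_zero hdet hdet'

lemma mApply_inv_comp {a b c d : ℂ} (h : a * d - b * c ≠ 0) :
    mApply d (-b) (-c) a ∘ mApply a b c d = id := by
  rw [mApply_comp d (-b) (-c) a a b c d h]
  rw [show d * a + -b * c = a * d - b * c by ring, show d * b + -b * d = 0 by ring,
    show -c * a + a * c = 0 by ring, show -c * b + a * d = a * d - b * c by ring]
  exact mApply_diag h

/-- The deck group of a map `F` of the Riemann sphere: the group of all Möbius
transformations `μ` with `F ∘ μ = F`, as a subgroup of the permutations of the sphere. -/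
def deckGroup (F : RSphere → RSphere) : Subgroup (Equiv.Perm RSphere) where
  carrier := {σ | IsMobius ⇑σ ∧ F ∘ ⇑σ = F}
  one_mem' := ⟨by rw [Equiv.Perm.coe_one]; exact IsMobius.id', by rw [Equiv.Perm.coe_one, Function.comp_id]⟩
  mul_mem' := by
    intro σ τ hσ hτ
    refine ⟨?_, ?_⟩
    · rw [Equiv.Perm.coe_mul]; exact hσ.1.comp hτ.1
    · rw [Equiv.Perm.coe_mul, ← Function.comp_assoc, hσ.2, hτ.2]
  inv_mem' := by
    intro σ hσ
    obtain ⟨⟨a, b, c, d, hdet, hg⟩, hF⟩ := hσ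
    have hinv : ⇑σ⁻¹ = mApply d (-b) (-c) a := by
      funext x
      have h1 : mApply d (-b) (-c) a ∘ ⇑σ = id := by rw [hg]; exact mApply_inv_comp hdet
      have h2 := congrFun h1 (σ⁻¹ x)
      simp only [comp_apply, id_eq] at h2
      rw [show σ (σ⁻¹ x) = x from σ.apply_symm_apply x] at h2
      exact h2.symm
    constructor
    · exact ⟨d, -b, -c, a, by rw [show d * a - -b * -c = a * d - b * c by ring]; exact hdet, hinv⟩
    · funext x
      have h3 := congrFun hF (σ⁻¹ x)
      simp only [comp_apply] at h3
      rw [show σ (σ⁻¹ x) = x from σ.apply_symm_apply x] at h3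
      exact h3.symm

end RSphere

/-- A rational map of the Riemann sphere, given by a pair of coprime polynomials. -/
structure RatMap where
  num : Polynomial ℂ
  den : Polynomial ℂ
  coprime : IsCoprime num den

namespace RatMap

open RSphere

/-- The (topological) degree of a rational map. -/
def degree (f : RatMap) : ℕ := max f.num.natDegree f.den.natDegree

/-- Evaluation of a rational map at a point of the Riemann sphere. -/
def eval (f : RatMap) : RSphere → RSphere := fun z =>
  match z with
  | ∞ =>
      if f.den.degree < f.num.degree then ∞
      else if f.num.degree < f.den.degree then ((0 : ℂ) : RSphere)
      else ((f.num.leadingCoeff / f.den.leadingCoeff : ℂ) : RSphere)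
  | (x : ℂ) =>
      if f.den.eval x = 0 then ∞ else ((f.num.eval x / f.den.eval x : ℂ) : RSphere)

/-- The polynomial whose finite roots (with multiplicity) form the fiber of `f` over `w`. -/
def fiberPoly (f : RatMap) (w : RSphere) : Polynomial ℂ :=
  match w with
  | ∞ => f.den
  | (c : ℂ) => f.num - Polynomial.C c * f.den

/-- The local degree of a rational map at a point of the Riemann sphere: the multiplicity
of the point in the fiber over its image. -/
def localDegree (f : RatMap) (z : RSphere) : ℕ :=
  match z with
  | ∞ => f.degree - (f.fiberPoly (f.eval ∞)).natDegree
  | (x : ℂ) => (f.fiberPoly (f.eval (x : RSphere))).rootMultiplicity x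

/-- The set of critical points of a rational map. -/
def criticalPoints (f : RatMap) : Set RSphere := {z | 2 ≤ f.localDegree z}

/-- The set of critical values of a rational map. -/
def criticalValues (f : RatMap) : Set RSphere := f.eval '' f.criticalPoints

/-- A rational map is bicritical if it has exactly two critical points. -/
def Bicritical (f : RatMap) : Prop := f.criticalPoints.encard = 2

/-- The local degree of the iterate `f^k` at `z` (computed by the chain rule for
local degrees). -/
def localDegreeIter (f : RatMap) (k : ℕ) (z : RSphere) : ℕ :=
  ∏ j ∈ Finset.range k, f.localDegree (f.eval^[j] z)

/-- The power map `z ↦ z ^ d` on the Riemann sphere. -/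
def powMap (d : ℕ) : RSphere → RSphere := fun z =>
  match z with
  | ∞ => ∞
  | (x : ℂ) => ((x ^ d : ℂ) : RSphere)

/-- The power map `z ↦ z ^ (-d)` on the Riemann sphere. -/
def powMapNeg (d : ℕ) : RSphere → RSphere := fun z =>
  match z with
  | ∞ => ((0 : ℂ) : RSphere)
  | (x : ℂ) => if x = 0 then ∞ else (((x ^ d)⁻¹ : ℂ) : RSphere)

/-- A rational map of degree `d` is a power map if it is Möbius-conjugate to
`z ↦ z ^ d` or to `z ↦ z ^ (-d)`. -/
def IsPowerMap (f : RatMap) : Prop :=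
  ∃ g h : RSphere → RSphere, IsMobius g ∧ IsMobius h ∧ g ∘ h = id ∧ h ∘ g = id ∧
    (g ∘ f.eval ∘ h = powMap f.degree ∨ g ∘ f.eval ∘ h = powMapNeg f.degree)

/-- The deck group `Deck(f^k)` of the `k`-th iterate of `f`, with the convention
`Deck(f^0) = {id}`. -/
def deckIter (f : RatMap) (k : ℕ) : Subgroup (Equiv.Perm RSphere) :=
  if k = 0 then ⊥ else deckGroup (f.eval^[k])

/-- `Deck*(f^k) = Deck(f^k) \ Deck(f^{k-1})`, with the convention `Deck*(f^0) = {id}`. -/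
def deckStar (f : RatMap) (k : ℕ) : Set (Equiv.Perm RSphere) :=
  if k = 0 then {1}
  else (deckIter f k : Set (Equiv.Perm RSphere)) \ (deckIter f (k - 1) : Set (Equiv.Perm RSphere))

/-- A bicritical rational map with critical values `v₁ ≠ v₂` is critically coalescing
if `f(v₁) = f(v₂)`. -/
def CriticallyCoalescing (f : RatMap) : Prop :=
  ∃ v₁ v₂ : RSphere, v₁ ≠ v₂ ∧ f.criticalValues = {v₁, v₂} ∧ f.eval v₁ = f.eval v₂

end RatMap

/-- A group is dihedral if it is isomorphic to `D_{2n}` for some `n ≥ 2` (the Klein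
four-group `V₄ = D₄` counts as dihedral). -/
def IsDihedral (G : Type*) [Group G] : Prop :=
  ∃ n : ℕ, 2 ≤ n ∧ Nonempty (G ≃* DihedralGroup n)


section Aux

open RSphere RatMap

namespace RSphere

lemma mApply_comp_inv {a b c d : ℂ} (h : a * d - b * c ≠ 0) :
    mApply a b c d ∘ mApply d (-b) (-c) a = id := by
  have := mApply_inv_comp (show d * a - (-b) * (-c) ≠ 0 by
    rw [show d * a - (-b) * (-c) = a * d - b * c by ring]; exact h)
  rwa [neg_neg, neg_neg] at this

lemma powMap_infty (d : ℕ) : powMap d ∞ = ∞ := rfl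
lemma powMap_coe (d : ℕ) (x : ℂ) : powMap d (x : RSphere) = ((x ^ d : ℂ) : RSphere) := rfl

lemma powMap_surjective {d : ℕ} (hd : 1 ≤ d) : Function.Surjective (powMap d) := by
  intro w
  induction w using OnePoint.rec with
  | infty => exact ⟨∞, rfl⟩
  | coe x =>
    obtain ⟨z, hz⟩ := IsAlgClosed.exists_pow_nat_eq x (Nat.lt_of_lt_of_le Nat.zero_lt_one hd)
    exact ⟨(z : RSphere), by rw [powMap_coe, hz]⟩

lemma powMap_comp_scale (d : ℕ) (lam : ℂ) :
    powMap d ∘ mApply lam 0 0 1 = mApply (lam ^ d) 0 0 1 ∘ powMap d := by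
  funext z
  induction z using OnePoint.rec with
  | infty => simp [powMap_infty]
  | coe x => simp [powMap_coe, mul_pow]

lemma powMap_comp_invScale {d : ℕ} (hd : 1 ≤ d) (lam : ℂ) :
    powMap d ∘ mApply 0 lam 1 0 = mApply 0 (lam ^ d) 1 0 ∘ powMap d := by
  have hd0 : d ≠ 0 := by omega
  funext z
  induction z using OnePoint.rec with
  | infty => simp [powMap_infty, powMap_coe, zero_pow hd0]
  | coe x =>
    rcases eq_or_ne x 0 with rfl | hx
    · simp [powMap_infty, powMap_coe, zero_pow hd0]
    · have hxd : x ^ d ≠ 0 := pow_ne_zero _ hx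
      simp [powMap_coe, hx, hxd, div_pow]

/-- classification of Möbius maps permuting {0, ∞} -/
lemma mobius_fix_pair {ψ : RSphere → RSphere} (h : IsMobius ψ)
    (hpair : (ψ ((0:ℂ):RSphere) = ((0:ℂ):RSphere) ∧ ψ ∞ = ∞) ∨
      (ψ ((0:ℂ):RSphere) = ∞ ∧ ψ ∞ = ((0:ℂ):RSphere))) :
    ∃ lam : ℂ, lam ≠ 0 ∧ (ψ = mApply lam 0 0 1 ∨ ψ = mApply 0 lam 1 0) := by
  obtain ⟨a, b, c, d, hdet, rfl⟩ := h
  rcases hpair with ⟨h0, hi⟩ | ⟨h0, hi⟩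
  · have hc : c = 0 := by
      by_contra hc
      rw [mApply_infty, if_neg hc] at hi
      exact (OnePoint.coe_ne_infty _) hi
    have hd0 : d ≠ 0 := fun hd0 => hdet (by rw [hc, hd0]; ring)
    have hb : b = 0 := by
      rw [mApply_coe, hc] at h0
      simp only [zero_mul, zero_add, mul_zero] at h0
      rw [if_neg hd0] at h0
      have := OnePoint.coe_eq_coe.mp h0
      field_simp at this
      simpa using this
    refine ⟨a / d, ?_, Or.inl ?_⟩
    · have ha : a ≠ 0 := fun ha => hdet (by rw [ha, hb]; ring)
      exact div_ne_zero ha hd0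
    · funext z
      induction z using OnePoint.rec with
      | infty => simp [hc]
      | coe x =>
        rw [mApply_coe, mApply_coe, hc, hb]
        simp only [zero_mul, zero_add, mul_zero, add_zero]
        rw [if_neg hd0, if_neg one_ne_zero, OnePoint.coe_eq_coe]
        field_simp
        try ring
  · have hc : c ≠ 0 := by
      intro hc
      rw [mApply_infty, if_pos hc] at hi
      exact (OnePoint.infty_ne_coe _) hi
    have ha : a = 0 := by
      rw [mApply_infty, if_neg hc] at hi
      have := OnePoint.coe_eq_coe.mp hi
      field_simp at this
      simpa using this
    have hd0 : d = 0 := by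
      by_contra hd0
      rw [mApply_coe] at h0
      simp only [mul_zero, zero_add] at h0
      rw [if_neg hd0] at h0
      exact (OnePoint.coe_ne_infty _) h0
    have hb : b ≠ 0 := fun hb => hdet (by rw [hb, hd0]; ring)
    refine ⟨b / c, div_ne_zero hb hc, Or.inr ?_⟩
    funext z
    induction z using OnePoint.rec with
    | infty =>
      rw [mApply_infty, mApply_infty, if_neg hc, if_neg one_ne_zero, ha]
      norm_num
    | coe x =>
      rw [mApply_coe, mApply_coe, ha, hd0]
      simp only [zero_mul, zero_add, add_zero, one_mul, mul_zero]
      rcases eq_or_ne x 0 with rfl | hx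
      · rw [if_pos (mul_zero c), if_pos rfl]
      · rw [if_neg (mul_ne_zero hc hx), if_neg hx, OnePoint.coe_eq_coe]
        field_simp
        try ring

end RSphere

end Aux
namespace RatMap

open RSphere

lemma eval_coe (f : RatMap) (x : ℂ) :
    f.eval (x : RSphere) = if f.den.eval x = 0 then ∞ else ((f.num.eval x / f.den.eval x : ℂ) : RSphere) := rfl

lemma eval_infty (f : RatMap) :
    f.eval ∞ = if f.den.degree < f.num.degree then ∞
      else if f.num.degree < f.den.degree then ((0 : ℂ) : RSphere)
      else ((f.num.leadingCoeff / f.den.leadingCoeff : ℂ) : RSphere) := rfl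

end RatMap

namespace MobAux

open RatMap RSphere

lemma natDegree_lt_of {g : Polynomial ℂ} {d : ℕ} (h1 : g.natDegree ≤ d)
    (h2 : g.coeff d = 0) (h3 : g ≠ 0) : g.natDegree < d := by
  rcases lt_or_eq_of_le h1 with h | h
  · exact h
  · exact absurd (Polynomial.leadingCoeff_eq_zero.mp (show g.leadingCoeff = 0 by rw [Polynomial.leadingCoeff, h, h2])) h3

lemma monic_pow_sub (p : ℂ) (d : ℕ) : ((X - C p) ^ d : Polynomial ℂ).Monic :=
  (Polynomial.monic_X_sub_C p).pow d

lemma natDegree_pow_sub (p : ℂ) (d : ℕ) : ((X - C p) ^ d : Polynomial ℂ).natDegree = d := by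
  rw [Polynomial.natDegree_pow, Polynomial.natDegree_X_sub_C, mul_one]

lemma combo_coeff (p q : ℂ) (d : ℕ) (s t : ℂ) :
    (C s * (X - C p) ^ d + C t * (X - C q) ^ d).coeff d = s + t := by
  rw [Polynomial.coeff_add, Polynomial.coeff_C_mul, Polynomial.coeff_C_mul]
  have h1 : ((X - C p) ^ d : Polynomial ℂ).coeff d = 1 := by
    have := (monic_pow_sub p d).coeff_natDegree
    rwa [natDegree_pow_sub] at this
  have h2 : ((X - C q) ^ d : Polynomial ℂ).coeff d = 1 := by
    have := (monic_pow_sub q d).coeff_natDegree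
    rwa [natDegree_pow_sub] at this
  rw [h1, h2, mul_one, mul_one]

lemma combo_natDegree_le (p q : ℂ) (d : ℕ) (s t : ℂ) :
    (C s * (X - C p) ^ d + C t * (X - C q) ^ d).natDegree ≤ d := by
  refine le_trans (Polynomial.natDegree_add_le _ _) ?_
  refine max_le (le_trans (Polynomial.natDegree_C_mul_le _ _) ?_)
    (le_trans (Polynomial.natDegree_C_mul_le _ _) ?_) <;> rw [natDegree_pow_sub]

lemma combo_eval (p q : ℂ) (d : ℕ) (s t : ℂ) (x : ℂ) :
    (C s * (X - C p) ^ d + C t * (X - C q) ^ d).eval x = s * (x - p) ^ d + t * (x - q) ^ d := by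
  simp

lemma combo_ne_zero {p q : ℂ} (hpq : p ≠ q) {d : ℕ} (hd : 1 ≤ d) {s t : ℂ}
    (hst : ¬(s = 0 ∧ t = 0)) :
    (C s * (X - C p) ^ d + C t * (X - C q) ^ d) ≠ 0 := by
  have hd0 : d ≠ 0 := by omega
  intro h
  have h1 := congrArg (Polynomial.eval p) h
  have h2 := congrArg (Polynomial.eval q) h
  rw [combo_eval] at h1 h2
  simp only [sub_self, Polynomial.eval_zero, zero_pow hd0, mul_zero, zero_add, add_zero] at h1 h2
  apply hst
  constructor
  · rcases mul_eq_zero.mp h2 with h | h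
    · exact h
    · exact absurd h (pow_ne_zero _ (sub_ne_zero.mpr (Ne.symm hpq)))
  · rcases mul_eq_zero.mp h1 with h | h
    · exact h
    · exact absurd h (pow_ne_zero _ (sub_ne_zero.mpr hpq))

lemma combo_natDegree {p q : ℂ} {d : ℕ} {s t : ℂ} (h : s + t ≠ 0) :
    (C s * (X - C p) ^ d + C t * (X - C q) ^ d).natDegree = d := by
  refine le_antisymm (combo_natDegree_le p q d s t) ?_
  exact Polynomial.le_natDegree_of_ne_zero (by rw [combo_coeff]; exact h)

lemma combo_leadingCoeff {p q : ℂ} {d : ℕ} {s t : ℂ} (h : s + t ≠ 0) :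
    (C s * (X - C p) ^ d + C t * (X - C q) ^ d).leadingCoeff = s + t := by
  rw [Polynomial.leadingCoeff, combo_natDegree h, combo_coeff]

lemma combo_natDegree_lt {p q : ℂ} (hpq : p ≠ q) {d : ℕ} (hd : 1 ≤ d) {s t : ℂ} (h : s + t = 0)
    (hst : ¬(s = 0 ∧ t = 0)) :
    (C s * (X - C p) ^ d + C t * (X - C q) ^ d).natDegree < d := by
  exact natDegree_lt_of (combo_natDegree_le p q d s t) (by rw [combo_coeff]; exact h)
    (combo_ne_zero hpq hd hst)

end MobAux
namespace MobAux

open RatMap RSphere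

lemma fact1 (f : RatMap) {p q : ℂ} (hpq : p ≠ q) {d : ℕ} (hd : 1 ≤ d) {a b c e : ℂ}
    (hdet : a * e - b * c ≠ 0)
    (hnum : f.num = C a * (X - C p) ^ d + C b * (X - C q) ^ d)
    (hden : f.den = C c * (X - C p) ^ d + C e * (X - C q) ^ d) :
    f.eval = mApply a b c e ∘ powMap d ∘ mApply 1 (-p) 1 (-q) := by
  have hab : ¬(a = 0 ∧ b = 0) := fun ⟨h1, h2⟩ => hdet (by rw [h1, h2]; ring)
  have hce : ¬(c = 0 ∧ e = 0) := fun ⟨h1, h2⟩ => hdet (by rw [h1, h2]; ring)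
  have habce : ¬(a + b = 0 ∧ c + e = 0) := by
    rintro ⟨h1, h2⟩
    apply hdet
    have hb : b = -a := by linear_combination h1
    have he : e = -c := by linear_combination h2
    rw [hb, he]; ring
  have hnum0 : f.num ≠ 0 := hnum ▸ combo_ne_zero hpq hd hab
  have hden0 : f.den ≠ 0 := hden ▸ combo_ne_zero hpq hd hce
  funext z
  induction z using OnePoint.rec with
  | infty =>
    rw [eval_infty]
    have hL2 : mApply 1 (-p) 1 (-q) ∞ = ((1 : ℂ) : RSphere) := by
      rw [mApply_infty, if_neg one_ne_zero, div_one]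
    rw [Function.comp_apply, Function.comp_apply, hL2, powMap_coe, one_pow, mApply_coe]
    rw [mul_one]
    have hdegnum : f.num.degree = (f.num.natDegree : WithBot ℕ) := Polynomial.degree_eq_natDegree hnum0
    have hdegden : f.den.degree = (f.den.natDegree : WithBot ℕ) := Polynomial.degree_eq_natDegree hden0
    rcases eq_or_ne (c + e) 0 with hce0 | hce0
    · -- den has degree < d, num has degree = d (since a+b ≠ 0)
      have hab0 : a + b ≠ 0 := fun h => habce ⟨h, hce0⟩
      have h1 : f.den.natDegree < f.num.natDegree := by
        rw [hnum, hden, combo_natDegree hab0]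
        exact combo_natDegree_lt hpq hd hce0 hce
      rw [if_pos hce0, if_pos (by rw [hdegnum, hdegden]; exact_mod_cast h1)]
    · rcases eq_or_ne (a + b) 0 with hab0 | hab0
      · have h1 : f.num.natDegree < f.den.natDegree := by
          rw [hnum, hden, combo_natDegree hce0]
          exact combo_natDegree_lt hpq hd hab0 hab
        rw [if_neg hce0,
          if_neg (by rw [hdegnum, hdegden]; push_cast; exact_mod_cast not_lt.mpr (le_of_lt h1)),
          if_pos (by rw [hdegnum, hdegden]; exact_mod_cast h1)]
        rw [OnePoint.coe_eq_coe, mul_one, hab0, zero_div]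
      · have h1 : f.num.natDegree = f.den.natDegree := by
          rw [hnum, hden, combo_natDegree hab0, combo_natDegree hce0]
        rw [if_neg hce0, if_neg (by rw [hdegnum, hdegden, h1]; exact lt_irrefl _),
          if_neg (by rw [hdegnum, hdegden, h1]; exact lt_irrefl _)]
        rw [hnum, hden, combo_leadingCoeff hab0, combo_leadingCoeff hce0, mul_one]
  | coe x =>
    rw [eval_coe, Function.comp_apply, Function.comp_apply]
    by_cases hxq : x = q
    · subst hxq
      have hL2 : mApply 1 (-p) 1 (-x) (x : RSphere) = ∞ := by
        rw [mApply_coe, if_pos (by ring)]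
      rw [hL2, powMap_infty, mApply_infty]
      have hqp : (x - p) ^ d ≠ 0 := pow_ne_zero _ (sub_ne_zero.mpr (Ne.symm hpq))
      have hdeval : f.den.eval x = c * (x - p) ^ d := by
        rw [hden, combo_eval, sub_self, zero_pow (by omega), mul_zero, add_zero]
      have hneval : f.num.eval x = a * (x - p) ^ d := by
        rw [hnum, combo_eval, sub_self, zero_pow (by omega), mul_zero, add_zero]
      rcases eq_or_ne c 0 with rfl | hc
      · rw [if_pos rfl, if_pos (by rw [hdeval, zero_mul])]
      · rw [if_neg hc, if_neg (by rw [hdeval]; exact mul_ne_zero hc hqp), hneval, hdeval,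
          mul_div_mul_right _ _ hqp]
    · have hxq' : (1 : ℂ) * x + -q ≠ 0 := by
        rw [one_mul]; exact fun h => hxq (by linear_combination h)
      have hL2 : mApply 1 (-p) 1 (-q) (x : RSphere) = (((x - p) / (x - q) : ℂ) : RSphere) := by
        rw [mApply_coe, if_neg hxq', OnePoint.coe_eq_coe]
        ring_nf
      rw [hL2, powMap_coe, mApply_coe]
      set t : ℂ := ((x - p) / (x - q)) ^ d with ht
      have hxqd : (x - q) ^ d ≠ 0 := pow_ne_zero _ (sub_ne_zero.mpr hxq)
      have hkeyd : c * t + e = f.den.eval x / (x - q) ^ d := by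
        rw [ht, hden, combo_eval, div_pow]
        field_simp
      have hkeyn : a * t + b = f.num.eval x / (x - q) ^ d := by
        rw [ht, hnum, combo_eval, div_pow]
        field_simp
      rcases eq_or_ne (f.den.eval x) 0 with hdx | hdx
      · rw [if_pos hdx, if_pos (by rw [hkeyd, hdx, zero_div])]
      · rw [if_neg hdx, if_neg (by rw [hkeyd]; exact div_ne_zero hdx hxqd), OnePoint.coe_eq_coe,
          hkeyd, hkeyn]
        field_simp
end MobAux
namespace MobAux

open RatMap RSphere

lemma combo2_coeff (p : ℂ) {d : ℕ} (hd : 1 ≤ d) (s t : ℂ) :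
    (C s * (X - C p) ^ d + C t).coeff d = s := by
  rw [Polynomial.coeff_add, Polynomial.coeff_C_mul, Polynomial.coeff_C, if_neg (by omega)]
  have h1 : ((X - C p) ^ d : Polynomial ℂ).coeff d = 1 := by
    have := (monic_pow_sub p d).coeff_natDegree
    rwa [natDegree_pow_sub] at this
  rw [h1, mul_one, add_zero]

lemma combo2_natDegree_le (p : ℂ) (d : ℕ) (s t : ℂ) :
    (C s * (X - C p) ^ d + C t).natDegree ≤ d := by
  refine le_trans (Polynomial.natDegree_add_le _ _) (max_le ?_ ?_)
  · exact le_trans (Polynomial.natDegree_C_mul_le _ _) (le_of_eq (natDegree_pow_sub p d))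
  · simp
lemma combo2_eval (p : ℂ) (d : ℕ) (s t : ℂ) (x : ℂ) :
    (C s * (X - C p) ^ d + C t).eval x = s * (x - p) ^ d + t := by simp

lemma combo2_ne_zero (p : ℂ) {d : ℕ} (hd : 1 ≤ d) {s t : ℂ} (hst : ¬(s = 0 ∧ t = 0)) :
    (C s * (X - C p) ^ d + C t) ≠ 0 := by
  intro h
  have h1 : s = 0 := by
    have := congrArg (fun g => Polynomial.coeff g d) h
    simpa [combo2_coeff p hd] using this
  have h2 : t = 0 := by
    have := congrArg (Polynomial.eval p) h
    rw [combo2_eval] at this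
    simpa [zero_pow (show d ≠ 0 by omega)] using this
  exact hst ⟨h1, h2⟩

lemma combo2_natDegree (p : ℂ) {d : ℕ} (hd : 1 ≤ d) {s : ℂ} (hs : s ≠ 0) (t : ℂ) :
    (C s * (X - C p) ^ d + C t).natDegree = d := by
  refine le_antisymm (combo2_natDegree_le p d s t) ?_
  exact Polynomial.le_natDegree_of_ne_zero (by rw [combo2_coeff p hd]; exact hs)

lemma combo2_leadingCoeff (p : ℂ) {d : ℕ} (hd : 1 ≤ d) {s : ℂ} (hs : s ≠ 0) (t : ℂ) :
    (C s * (X - C p) ^ d + C t).leadingCoeff = s := by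
  rw [Polynomial.leadingCoeff, combo2_natDegree p hd hs, combo2_coeff p hd]

lemma fact2 (f : RatMap) (p : ℂ) {d : ℕ} (hd : 1 ≤ d) {a b c e : ℂ}
    (hdet : a * e - b * c ≠ 0)
    (hnum : f.num = C a * (X - C p) ^ d + C b)
    (hden : f.den = C c * (X - C p) ^ d + C e) :
    f.eval = mApply a b c e ∘ powMap d ∘ mApply 1 (-p) 0 1 := by
  have hab : ¬(a = 0 ∧ b = 0) := fun ⟨h1, h2⟩ => hdet (by rw [h1, h2]; ring)
  have hce : ¬(c = 0 ∧ e = 0) := fun ⟨h1, h2⟩ => hdet (by rw [h1, h2]; ring)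
  have hnum0 : f.num ≠ 0 := hnum ▸ combo2_ne_zero p hd hab
  have hden0 : f.den ≠ 0 := hden ▸ combo2_ne_zero p hd hce
  have hdegnum : f.num.degree = (f.num.natDegree : WithBot ℕ) := Polynomial.degree_eq_natDegree hnum0
  have hdegden : f.den.degree = (f.den.natDegree : WithBot ℕ) := Polynomial.degree_eq_natDegree hden0
  funext z
  induction z using OnePoint.rec with
  | infty =>
    rw [eval_infty]
    have hL2 : mApply 1 (-p) 0 1 ∞ = ∞ := by rw [mApply_infty, if_pos rfl]
    rw [Function.comp_apply, Function.comp_apply, hL2, powMap_infty, mApply_infty]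
    rcases eq_or_ne c 0 with rfl | hc
    · have he : e ≠ 0 := fun h => hce ⟨rfl, h⟩
      have ha : a ≠ 0 := fun h => hdet (by rw [h]; ring)
      have h1 : f.den.natDegree < f.num.natDegree := by
        rw [hnum, hden, combo2_natDegree p hd ha]
        simp only [Polynomial.C_0, zero_mul, zero_add]
        rw [Polynomial.natDegree_C]
        omega
      rw [if_pos rfl, if_pos (by rw [hdegnum, hdegden]; exact_mod_cast h1)]
    · rw [if_neg hc]
      rcases eq_or_ne a 0 with rfl | ha
      · have hb : b ≠ 0 := fun h => hab ⟨rfl, h⟩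
        have h1 : f.num.natDegree < f.den.natDegree := by
          rw [hnum, hden, combo2_natDegree p hd hc]
          simp only [Polynomial.C_0, zero_mul, zero_add]
          rw [Polynomial.natDegree_C]
          omega
        rw [if_neg (by rw [hdegnum, hdegden]; exact_mod_cast not_lt.mpr (le_of_lt h1)),
          if_pos (by rw [hdegnum, hdegden]; exact_mod_cast h1), OnePoint.coe_eq_coe, zero_div]
      · have h1 : f.num.natDegree = f.den.natDegree := by
          rw [hnum, hden, combo2_natDegree p hd ha, combo2_natDegree p hd hc]
        rw [if_neg (by rw [hdegnum, hdegden, h1]; exact lt_irrefl _),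
          if_neg (by rw [hdegnum, hdegden, h1]; exact lt_irrefl _),
          hnum, hden, combo2_leadingCoeff p hd ha, combo2_leadingCoeff p hd hc]
  | coe x =>
    rw [eval_coe, Function.comp_apply, Function.comp_apply]
    have hL2 : mApply 1 (-p) 0 1 (x : RSphere) = ((x - p : ℂ) : RSphere) := by
      rw [mApply_coe, if_neg (by norm_num), OnePoint.coe_eq_coe]
      ring_nf
    rw [hL2, powMap_coe, mApply_coe]
    have hdeval : f.den.eval x = c * (x - p) ^ d + e := by rw [hden, combo2_eval]
    have hneval : f.num.eval x = a * (x - p) ^ d + b := by rw [hnum, combo2_eval]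
    rcases eq_or_ne (f.den.eval x) 0 with hdx | hdx
    · rw [if_pos hdx, if_pos (show c * (x - p) ^ d + e = 0 by rw [← hdeval]; exact hdx)]
    · rw [if_neg hdx, if_neg (show ¬(c * (x - p) ^ d + e = 0) by rw [← hdeval]; exact hdx),
        OnePoint.coe_eq_coe, hdeval, hneval]

end MobAux
namespace MobAux

open RatMap RSphere

lemma fiberPoly_coe (f : RatMap) (c : ℂ) : f.fiberPoly ((c : ℂ) : RSphere) = f.num - C c * f.den := rfl
lemma fiberPoly_infty (f : RatMap) : f.fiberPoly ∞ = f.den := rfl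
lemma localDegree_coe (f : RatMap) (x : ℂ) :
    f.localDegree (x : RSphere) = (f.fiberPoly (f.eval (x : RSphere))).rootMultiplicity x := rfl
lemma localDegree_infty (f : RatMap) :
    f.localDegree ∞ = f.degree - (f.fiberPoly (f.eval ∞)).natDegree := rfl

lemma num_ne_zero (f : RatMap) (hd : 1 ≤ f.degree) : f.num ≠ 0 := by
  intro h
  have := isCoprime_zero_left.mp (h ▸ f.coprime)
  have h2 := Polynomial.natDegree_eq_zero_of_isUnit this
  have : f.degree = 0 := by
    rw [RatMap.degree, h, Polynomial.natDegree_zero, h2]; simp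
  omega

lemma den_ne_zero (f : RatMap) (hd : 1 ≤ f.degree) : f.den ≠ 0 := by
  intro h
  have := isCoprime_zero_right.mp (h ▸ f.coprime)
  have h2 := Polynomial.natDegree_eq_zero_of_isUnit this
  have : f.degree = 0 := by
    rw [RatMap.degree, h, Polynomial.natDegree_zero, h2]; simp
  omega

lemma num_sub_c_den_ne_zero (f : RatMap) (hd : 1 ≤ f.degree) (c : ℂ) :
    f.num - C c * f.den ≠ 0 := by
  intro h
  have hnum : f.num = C c * f.den := by linear_combination h
  have hden : IsUnit f.den :=
    f.coprime.isUnit_of_dvd' ⟨C c, by rw [hnum]; ring⟩ dvd_rfl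
  have h2 := Polynomial.natDegree_eq_zero_of_isUnit hden
  have h3 : f.num.natDegree = 0 := by
    rw [hnum]
    refine le_antisymm (le_trans (Polynomial.natDegree_C_mul_le _ _) (le_of_eq h2)) (Nat.zero_le _)
  have : f.degree = 0 := by rw [RatMap.degree, h2, h3]; simp
  omega

lemma fiberPoly_ne_zero (f : RatMap) (hd : 1 ≤ f.degree) (w : RSphere) : f.fiberPoly w ≠ 0 := by
  induction w using OnePoint.rec with
  | infty => exact den_ne_zero f hd
  | coe c => exact num_sub_c_den_ne_zero f hd c

lemma fiberPoly_natDegree_le (f : RatMap) (w : RSphere) : (f.fiberPoly w).natDegree ≤ f.degree := by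
  induction w using OnePoint.rec with
  | infty => exact le_max_right _ _
  | coe c =>
    refine le_trans (Polynomial.natDegree_sub_le _ _) (max_le (le_max_left _ _) ?_)
    exact le_trans (Polynomial.natDegree_C_mul_le _ _) (le_max_right _ _)

lemma localDegree_coe_le (f : RatMap) (hd : 1 ≤ f.degree) (x : ℂ) :
    f.localDegree (x : RSphere) ≤ f.degree := by
  rw [localDegree_coe]
  refine le_trans ?_ (fiberPoly_natDegree_le f (f.eval (x : RSphere)))
  set g := f.fiberPoly (f.eval (x : RSphere)) with hg
  have hg0 : g ≠ 0 := fiberPoly_ne_zero f hd _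
  have := Polynomial.pow_rootMultiplicity_dvd g x
  have hle := Polynomial.natDegree_le_of_dvd this hg0
  rwa [Polynomial.natDegree_pow, Polynomial.natDegree_X_sub_C, mul_one] at hle

lemma localDegree_infty_le (f : RatMap) : f.localDegree ∞ ≤ f.degree := by
  rw [localDegree_infty]; omega

/-- the Wronskian of a rational map -/
def wron (f : RatMap) : Polynomial ℂ :=
  Polynomial.derivative f.num * f.den - f.num * Polynomial.derivative f.den

lemma isRoot_fiberPoly (f : RatMap) (x : ℂ) : (f.fiberPoly (f.eval (x : RSphere))).IsRoot x := by
  rw [eval_coe]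
  rcases eq_or_ne (f.den.eval x) 0 with h | h
  · rw [if_pos h, fiberPoly_infty]; exact h
  · rw [if_neg h, fiberPoly_coe]
    simp only [Polynomial.IsRoot, Polynomial.eval_sub, Polynomial.eval_mul, Polynomial.eval_C]
    field_simp
    ring

lemma localDegree_coe_pos (f : RatMap) (hd : 1 ≤ f.degree) (x : ℂ) :
    1 ≤ f.localDegree (x : RSphere) := by
  rw [localDegree_coe]
  exact (Polynomial.rootMultiplicity_pos (fiberPoly_ne_zero f hd _)).mpr (isRoot_fiberPoly f x)

lemma rootMultiplicity_neg (P : Polynomial ℂ) (x : ℂ) :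
    (-P).rootMultiplicity x = P.rootMultiplicity x := by
  rcases eq_or_ne P 0 with rfl | h
  · rw [neg_zero]
  · have : -P = C (-1) * P := by rw [map_neg, map_one, neg_one_mul]
    rw [this, Polynomial.rootMultiplicity_mul (by simpa using h)]
    rw [Polynomial.rootMultiplicity_eq_zero (by
      intro hr
      rw [Polynomial.IsRoot, Polynomial.eval_C] at hr
      exact (by norm_num : (-1 : ℂ) ≠ 0) hr), zero_add]

/-- multiplicity of the Wronskian-type expression at a root of g not shared by h -/
lemma rootMult_wron_aux {g h : Polynomial ℂ} {x : ℂ} (hg : g ≠ 0) (hgx : g.eval x = 0)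
    (hhx : h.eval x ≠ 0) :
    (Polynomial.derivative g * h - g * Polynomial.derivative h).rootMultiplicity x + 1 =
      g.rootMultiplicity x := by
  obtain ⟨m, hm⟩ : ∃ m, g.rootMultiplicity x = m + 1 := by
    have := (Polynomial.rootMultiplicity_pos hg).mpr hgx
    exact ⟨g.rootMultiplicity x - 1, by omega⟩
  obtain ⟨u, hu, hnd⟩ := Polynomial.exists_eq_pow_rootMultiplicity_mul_and_not_dvd g hg x
  have hux : u.eval x ≠ 0 := fun h0 => hnd (Polynomial.dvd_iff_isRoot.mpr h0)
  rw [hm] at hu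
  -- W-type expression = (X - C x) ^ m * H
  set H : Polynomial ℂ :=
    (C ((m : ℂ) + 1) * u + (X - C x) * Polynomial.derivative u) * h
      - (X - C x) * u * Polynomial.derivative h with hH
  have hWeq : Polynomial.derivative g * h - g * Polynomial.derivative h = (X - C x) ^ m * H := by
    rw [hu, hH]
    have hder : Polynomial.derivative ((X - C x) ^ (m + 1) * u)
        = C ((m : ℂ) + 1) * (X - C x) ^ m * u + (X - C x) ^ (m + 1) * Polynomial.derivative u := by
      rw [Polynomial.derivative_mul, Polynomial.derivative_pow, Polynomial.derivative_X_sub_C]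
      push_cast
      ring
    rw [hder]
    ring
  have hHx : H.eval x ≠ 0 := by
    rw [hH]
    simp only [Polynomial.eval_sub, Polynomial.eval_mul, Polynomial.eval_add, Polynomial.eval_C,
      Polynomial.eval_sub, Polynomial.eval_X, sub_self, zero_mul, mul_zero, add_zero, sub_zero]
    exact mul_ne_zero (by
      push_cast
      exact mul_ne_zero (Nat.cast_add_one_ne_zero m) hux) hhx
  have hH0 : H ≠ 0 := fun h0 => hHx (by rw [h0, Polynomial.eval_zero])
  rw [hWeq, Polynomial.rootMultiplicity_mul (mul_ne_zero (pow_ne_zero _ (Polynomial.X_sub_C_ne_zero x)) hH0),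
    Polynomial.rootMultiplicity_X_sub_C_pow,
    Polynomial.rootMultiplicity_eq_zero (fun hr => hHx hr), hm]

lemma coprime_eval_ne_zero (f : RatMap) {x : ℂ} (h : f.den.eval x = 0) : f.num.eval x ≠ 0 := by
  obtain ⟨α, β, hαβ⟩ := f.coprime
  intro h0
  have := congrArg (Polynomial.eval x) hαβ
  simp only [Polynomial.eval_add, Polynomial.eval_mul, Polynomial.eval_one, h, h0, mul_zero] at this
  simp at this

lemma localDegree_eq_wron (f : RatMap) (hd : 1 ≤ f.degree) (x : ℂ) :
    f.localDegree (x : RSphere) = (wron f).rootMultiplicity x + 1 := by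
  rcases eq_or_ne (f.den.eval x) 0 with hden | hden
  · -- pole case: fiber polynomial is den
    have hev : f.eval (x : RSphere) = ∞ := by rw [eval_coe, if_pos hden]
    rw [localDegree_coe, hev, fiberPoly_infty]
    have hnum : f.num.eval x ≠ 0 := coprime_eval_ne_zero f hden
    have := rootMult_wron_aux (den_ne_zero f hd) hden hnum
    have hsign : wron f =
        -(Polynomial.derivative f.den * f.num - f.den * Polynomial.derivative f.num) := by
      rw [wron]; ring
    rw [hsign, rootMultiplicity_neg, this]
  · set c : ℂ := f.num.eval x / f.den.eval x with hc
    have hev : f.eval (x : RSphere) = ((c : ℂ) : RSphere) := by rw [eval_coe, if_neg hden]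
    rw [localDegree_coe, hev, fiberPoly_coe]
    set g : Polynomial ℂ := f.num - C c * f.den with hg
    have hg0 : g ≠ 0 := num_sub_c_den_ne_zero f hd c
    have hgx : g.eval x = 0 := by
      rw [hg, hc]
      simp only [Polynomial.eval_sub, Polynomial.eval_mul, Polynomial.eval_C]
      field_simp
      ring
    have hWg : wron f = Polynomial.derivative g * f.den - g * Polynomial.derivative f.den := by
      rw [wron, hg, Polynomial.derivative_sub, Polynomial.derivative_C_mul]
      ring
    rw [hWg, rootMult_wron_aux hg0 hgx hden]

/-- degree counting for the Wronskian-type expression -/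
lemma wron_deg_aux {g h : Polynomial ℂ} {d s : ℕ} (hgd : g.natDegree + s = d) (hs : 1 ≤ s)
    (hhd : h.natDegree = d) (hg0 : g ≠ 0) (hh0 : h ≠ 0) :
    (Polynomial.derivative g * h - g * Polynomial.derivative h) ≠ 0 ∧
    (Polynomial.derivative g * h - g * Polynomial.derivative h).natDegree + 1 + s = 2 * d := by
  set m := g.natDegree with hm
  set W := Polynomial.derivative g * h - g * Polynomial.derivative h with hW
  have hd1 : 1 ≤ d := by omega
  have hlg : g.coeff m ≠ 0 := by
    rw [hm]; exact Polynomial.leadingCoeff_ne_zero.mpr hg0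
  have hlh : h.coeff d ≠ 0 := by
    rw [← hhd]; exact Polynomial.leadingCoeff_ne_zero.mpr hh0
  rcases Nat.eq_zero_or_pos m with hm0 | hmpos
  · -- g is a nonzero constant
    have hgC : Polynomial.derivative g = 0 := by
      obtain ⟨a, ha⟩ := Polynomial.natDegree_eq_zero.mp (hm ▸ hm0)
      rw [← ha, Polynomial.derivative_C]
    have hWeq : W = -(g * Polynomial.derivative h) := by rw [hW, hgC]; ring
    have hcoeff : W.coeff (d - 1) ≠ 0 := by
      rw [hWeq, Polynomial.coeff_neg]
      have hc : (g * Polynomial.derivative h).coeff (0 + (d - 1)) =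
          g.coeff 0 * (Polynomial.derivative h).coeff (d - 1) := by
        refine Polynomial.coeff_mul_add_eq_of_natDegree_le (by omega) ?_
        exact le_trans (Polynomial.natDegree_derivative_le h) (by omega)
      rw [zero_add] at hc
      rw [hc, Polynomial.coeff_derivative, (by omega : d - 1 + 1 = d)]
      exact neg_ne_zero.mpr (mul_ne_zero (hm0 ▸ hlg)
        (mul_ne_zero hlh (Nat.cast_add_one_ne_zero (d - 1))))
    have hW0 : W ≠ 0 := fun h0 => hcoeff (by rw [h0, Polynomial.coeff_zero])
    have hub : W.natDegree ≤ d - 1 := by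
      rw [hWeq, Polynomial.natDegree_neg]
      refine le_trans (Polynomial.natDegree_mul_le) ?_
      have := Polynomial.natDegree_derivative_le h
      omega
    have hdeg : W.natDegree = d - 1 :=
      le_antisymm hub (Polynomial.le_natDegree_of_ne_zero hcoeff)
    exact ⟨hW0, by omega⟩
  · -- g nonconstant
    have hmd : m < d := by omega
    have hcm : ((m - 1 : ℕ) : ℂ) + 1 = (m : ℂ) := by
      have := Nat.succ_pred_eq_of_pos hmpos
      exact_mod_cast congrArg (Nat.cast : ℕ → ℂ) this
    have hcd : ((d - 1 : ℕ) : ℂ) + 1 = (d : ℂ) := by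
      have := Nat.succ_pred_eq_of_pos hd1
      exact_mod_cast congrArg (Nat.cast : ℕ → ℂ) this
    have c1 : (Polynomial.derivative g * h).coeff (m - 1 + d) =
        g.coeff m * (m : ℂ) * h.coeff d := by
      have h1 : (Polynomial.derivative g).natDegree ≤ m - 1 :=
        le_trans (Polynomial.natDegree_derivative_le g) (by omega)
      have h2 : h.natDegree ≤ d := le_of_eq hhd
      rw [Polynomial.coeff_mul_add_eq_of_natDegree_le h1 h2,
        Polynomial.coeff_derivative, (by omega : m - 1 + 1 = m), hcm]
      try ring
    have c2 : (g * Polynomial.derivative h).coeff (m + (d - 1)) =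
        g.coeff m * ((d : ℂ) * h.coeff d) := by
      have h1 : g.natDegree ≤ m := le_refl _
      have h2 : (Polynomial.derivative h).natDegree ≤ d - 1 :=
        le_trans (Polynomial.natDegree_derivative_le h) (by omega)
      rw [Polynomial.coeff_mul_add_eq_of_natDegree_le h1 h2,
        Polynomial.coeff_derivative, (by omega : d - 1 + 1 = d), hcd]
      try ring
    rw [(by omega : m + (d - 1) = m - 1 + d)] at c2
    have hcoeff : W.coeff (m - 1 + d) ≠ 0 := by
      rw [hW, Polynomial.coeff_sub, c1, c2]
      have : g.coeff m * (m : ℂ) * h.coeff d - g.coeff m * ((d : ℂ) * h.coeff d)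
          = g.coeff m * h.coeff d * ((m : ℂ) - (d : ℂ)) := by ring
      rw [this]
      refine mul_ne_zero (mul_ne_zero hlg hlh) (sub_ne_zero.mpr ?_)
      exact fun hEq => (by omega : m ≠ d) (Nat.cast_inj.mp hEq)
    have hW0 : W ≠ 0 := fun h0 => hcoeff (by rw [h0, Polynomial.coeff_zero])
    have hub : W.natDegree ≤ m - 1 + d := by
      rw [hW]
      refine le_trans (Polynomial.natDegree_sub_le _ _) (max_le ?_ ?_)
      · refine le_trans (Polynomial.natDegree_mul_le) ?_
        have := Polynomial.natDegree_derivative_le g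
        omega
      · refine le_trans (Polynomial.natDegree_mul_le) ?_
        have := Polynomial.natDegree_derivative_le h
        omega
    have hdeg : W.natDegree = m - 1 + d :=
      le_antisymm hub (Polynomial.le_natDegree_of_ne_zero hcoeff)
    exact ⟨hW0, by omega⟩

end MobAux
namespace MobAux

open RatMap RSphere

lemma degree_def (f : RatMap) : f.degree = max f.num.natDegree f.den.natDegree := rfl

lemma wron_fiber (f : RatMap) (c : ℂ) :
    wron f = Polynomial.derivative (f.num - C c * f.den) * f.den
      - (f.num - C c * f.den) * Polynomial.derivative f.den := by
  rw [wron, Polynomial.derivative_sub, Polynomial.derivative_C_mul]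
  ring

lemma wron_facts (f : RatMap) (hd : 1 ≤ f.degree) :
    wron f ≠ 0 ∧ (wron f).natDegree + 1 + f.localDegree ∞ = 2 * f.degree
      ∧ 1 ≤ f.localDegree ∞ := by
  have hnum0 := num_ne_zero f hd
  have hden0 := den_ne_zero f hd
  have hdn : f.num.degree = (f.num.natDegree : WithBot ℕ) := Polynomial.degree_eq_natDegree hnum0
  have hde : f.den.degree = (f.den.natDegree : WithBot ℕ) := Polynomial.degree_eq_natDegree hden0
  have hmax : f.degree = max f.num.natDegree f.den.natDegree := degree_def f
  rcases lt_trichotomy f.den.natDegree f.num.natDegree with hlt | heq | hgt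
  · -- numerator dominates : f(∞) = ∞
    have hev : f.eval ∞ = ∞ := by
      rw [eval_infty, if_pos (by rw [hdn, hde]; exact_mod_cast hlt)]
    have hl : f.localDegree ∞ = f.degree - f.den.natDegree := by
      rw [localDegree_infty, hev, fiberPoly_infty]
    obtain ⟨hW0, hWdeg⟩ := wron_deg_aux (g := f.den) (h := f.num)
      (d := f.degree) (s := f.degree - f.den.natDegree)
      (by omega) (by omega) (by omega) hden0 hnum0
    have hsign : wron f
        = -(Polynomial.derivative f.den * f.num - f.den * Polynomial.derivative f.num) := by
      rw [wron]; ring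
    refine ⟨by rw [hsign]; exact neg_ne_zero.mpr hW0, ?_, by rw [hl]; omega⟩
    rw [hsign, Polynomial.natDegree_neg, hl]
    omega
  · -- equal degrees : f(∞) is the ratio of leading coefficients
    have hbe : f.den.leadingCoeff ≠ 0 := Polynomial.leadingCoeff_ne_zero.mpr hden0
    have han : f.num.leadingCoeff ≠ 0 := Polynomial.leadingCoeff_ne_zero.mpr hnum0
    set c : ℂ := f.num.leadingCoeff / f.den.leadingCoeff with hc
    have hev : f.eval ∞ = ((c : ℂ) : RSphere) := by
      rw [eval_infty, if_neg (by rw [hdn, hde, heq]; exact lt_irrefl _),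
        if_neg (by rw [hdn, hde, heq]; exact lt_irrefl _)]
    set g : Polynomial ℂ := f.num - C c * f.den with hg
    have hg0 : g ≠ 0 := num_sub_c_den_ne_zero f hd c
    have hgle : g.natDegree ≤ f.degree := fiberPoly_natDegree_le f ((c : ℂ) : RSphere)
    have hdeq : f.num.natDegree = f.degree := by omega
    have hgcoeff : g.coeff f.degree = 0 := by
      rw [hg, Polynomial.coeff_sub, Polynomial.coeff_C_mul]
      have h1 : f.num.coeff f.degree = f.num.leadingCoeff := by
        rw [Polynomial.leadingCoeff, hdeq]
      have h2 : f.den.coeff f.degree = f.den.leadingCoeff := by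
        rw [Polynomial.leadingCoeff, (by omega : f.den.natDegree = f.degree)]
      rw [h1, h2, hc]
      field_simp
      ring
    have hglt : g.natDegree < f.degree := natDegree_lt_of hgle hgcoeff hg0
    have hl : f.localDegree ∞ = f.degree - g.natDegree := by
      rw [localDegree_infty, hev, fiberPoly_coe, ← hg]
    obtain ⟨hW0, hWdeg⟩ := wron_deg_aux (g := g) (h := f.den)
      (d := f.degree) (s := f.degree - g.natDegree)
      (by omega) (by omega) (by omega) hg0 hden0
    have hWg := wron_fiber f c
    rw [← hg] at hWg
    refine ⟨by rw [hWg]; exact hW0, ?_, by rw [hl]; omega⟩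
    rw [hWg, hl]
    omega
  · -- denominator dominates : f(∞) = 0
    have hev : f.eval ∞ = ((0 : ℂ) : RSphere) := by
      rw [eval_infty, if_neg (by rw [hdn, hde]; intro hcon; exact_mod_cast
        (by omega : ¬ (f.den.natDegree < f.num.natDegree)) (by exact_mod_cast hcon)),
        if_pos (by rw [hdn, hde]; exact_mod_cast hgt)]
    have hfz : f.fiberPoly ((0 : ℂ) : RSphere) = f.num := by
      rw [fiberPoly_coe, map_zero, zero_mul, sub_zero]
    have hl : f.localDegree ∞ = f.degree - f.num.natDegree := by
      rw [localDegree_infty, hev, hfz]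
    obtain ⟨hW0, hWdeg⟩ := wron_deg_aux (g := f.num) (h := f.den)
      (d := f.degree) (s := f.degree - f.num.natDegree)
      (by omega) (by omega) (by omega) hnum0 hden0
    exact ⟨by rw [wron]; exact hW0, by rw [wron, hl]; omega, by rw [hl]; omega⟩

end MobAux
namespace MobAux

open RatMap RSphere

lemma degree_pos_of_bicritical (f : RatMap) (hf : f.Bicritical) : 1 ≤ f.degree := by
  by_contra h
  have hd0 : f.degree = 0 := by omega
  have hmax : f.degree = max f.num.natDegree f.den.natDegree := degree_def f
  obtain ⟨α, hα⟩ := Polynomial.natDegree_eq_zero.mp (show f.num.natDegree = 0 by omega)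
  obtain ⟨β, hβ⟩ := Polynomial.natDegree_eq_zero.mp (show f.den.natDegree = 0 by omega)
  have hempty : f.criticalPoints = ∅ := by
    ext z
    simp only [RatMap.criticalPoints, Set.mem_setOf_eq, Set.mem_empty_iff_false, iff_false]
    intro h2
    induction z using OnePoint.rec with
    | infty =>
      rw [localDegree_infty, hd0] at h2
      omega
    | coe x =>
      rw [localDegree_coe] at h2
      rcases eq_or_ne (f.den.eval x) 0 with hb | hb
      · have hev : f.eval (x : RSphere) = ∞ := by rw [eval_coe, if_pos hb]
        have hden : f.den = 0 := by
          rw [← hβ] at hb ⊢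
          rw [Polynomial.eval_C] at hb
          rw [hb, map_zero]
        rw [hev, fiberPoly_infty, hden, Polynomial.rootMultiplicity_zero] at h2
        omega
      · have hev : f.eval (x : RSphere) = ((f.num.eval x / f.den.eval x : ℂ) : RSphere) := by
          rw [eval_coe, if_neg hb]
        have hfib : f.fiberPoly ((f.num.eval x / f.den.eval x : ℂ) : RSphere) = 0 := by
          rw [fiberPoly_coe, ← hα, ← hβ]
          simp only [Polynomial.eval_C]
          rw [← Polynomial.C_mul, div_mul_cancel₀]
          · exact sub_self _
          · rw [← hβ, Polynomial.eval_C] at hb; exact hb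
        rw [hev, hfib, Polynomial.rootMultiplicity_zero] at h2
        omega
  rw [RatMap.Bicritical, hempty, Set.encard_empty] at hf
  exact (by decide : (0 : ℕ∞) ≠ 2) hf

lemma roots_sum (W : Polynomial ℂ) :
    ∑ x ∈ W.roots.toFinset, W.rootMultiplicity x = W.natDegree := by
  have hsplits : W.Splits := IsAlgClosed.splits W
  have h1 := hsplits.natDegree_eq_card_roots
  rw [h1, ← Multiset.toFinset_sum_count_eq]
  exact Finset.sum_congr rfl fun x _ => Polynomial.count_roots W ▸ rfl

lemma crit_iff_root (f : RatMap) (hd : 1 ≤ f.degree) (hW0 : wron f ≠ 0) (x : ℂ) :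
    (x : RSphere) ∈ f.criticalPoints ↔ x ∈ (wron f).roots.toFinset := by
  rw [RatMap.criticalPoints, Set.mem_setOf_eq, localDegree_eq_wron f hd,
    Multiset.mem_toFinset, Polynomial.mem_roots hW0]
  constructor
  · intro h
    exact ((wron f).rootMultiplicity_pos hW0).mp (by omega)
  · intro h
    have := ((wron f).rootMultiplicity_pos hW0).mpr h
    omega

lemma key_case2 (f : RatMap) (hd : 1 ≤ f.degree) (p q : ℂ) (hpq : p ≠ q)
    (hset : f.criticalPoints = {((p : ℂ) : RSphere), ((q : ℂ) : RSphere)}) :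
    f.localDegree ((p : ℂ) : RSphere) = f.degree ∧
    f.localDegree ((q : ℂ) : RSphere) = f.degree ∧ 2 ≤ f.degree := by
  obtain ⟨hW0, hWdeg, hl1⟩ := wron_facts f hd
  have hroots : (wron f).roots.toFinset = {p, q} := by
    ext x
    rw [← crit_iff_root f hd hW0, hset]
    simp only [Set.mem_insert_iff, Set.mem_singleton_iff, OnePoint.coe_eq_coe,
      Finset.mem_insert, Finset.mem_singleton]
  have hsum := roots_sum (wron f)
  rw [hroots, Finset.sum_pair hpq] at hsum
  have hlp := localDegree_eq_wron f hd p
  have hlq := localDegree_eq_wron f hd q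
  have hmemp : ((p : ℂ) : RSphere) ∈ f.criticalPoints := by rw [hset]; simp
  have hmemq : ((q : ℂ) : RSphere) ∈ f.criticalPoints := by rw [hset]; simp
  rw [RatMap.criticalPoints, Set.mem_setOf_eq] at hmemp hmemq
  have hinf : ¬ (2 ≤ f.localDegree ∞) := by
    intro h2
    have : (∞ : RSphere) ∈ f.criticalPoints := by
      rw [RatMap.criticalPoints, Set.mem_setOf_eq]; exact h2
    rw [hset] at this
    simp only [Set.mem_insert_iff, Set.mem_singleton_iff] at this
    rcases this with h | h <;> exact (OnePoint.infty_ne_coe _) h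
  have hble1 := localDegree_coe_le f hd p
  have hble2 := localDegree_coe_le f hd q
  omega

lemma key_case1 (f : RatMap) (hd : 1 ≤ f.degree) (p : ℂ)
    (hset : f.criticalPoints = {((p : ℂ) : RSphere), ∞}) :
    f.localDegree ((p : ℂ) : RSphere) = f.degree ∧
    f.localDegree ∞ = f.degree ∧ 2 ≤ f.degree := by
  obtain ⟨hW0, hWdeg, hl1⟩ := wron_facts f hd
  have hroots : (wron f).roots.toFinset = {p} := by
    ext x
    rw [← crit_iff_root f hd hW0, hset]
    simp only [Set.mem_insert_iff, Set.mem_singleton_iff, OnePoint.coe_eq_coe,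
      Finset.mem_singleton]
    constructor
    · rintro (h | h)
      · exact h
      · exact absurd h (OnePoint.coe_ne_infty x)
    · intro h; exact Or.inl h
  have hsum := roots_sum (wron f)
  rw [hroots, Finset.sum_singleton] at hsum
  have hlp := localDegree_eq_wron f hd p
  have hmemp : ((p : ℂ) : RSphere) ∈ f.criticalPoints := by rw [hset]; simp
  have hmemi : (∞ : RSphere) ∈ f.criticalPoints := by rw [hset]; simp
  rw [RatMap.criticalPoints, Set.mem_setOf_eq] at hmemp hmemi
  have hble1 := localDegree_coe_le f hd p
  have hble2 := localDegree_infty_le f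
  omega

theorem key (f : RatMap) (hf : f.Bicritical) :
    ∃ (p : ℂ) (Q : RSphere), ((p : ℂ) : RSphere) ≠ Q ∧
      f.criticalPoints = {((p : ℂ) : RSphere), Q} ∧
      f.localDegree ((p : ℂ) : RSphere) = f.degree ∧ f.localDegree Q = f.degree ∧
      2 ≤ f.degree := by
  have hd := degree_pos_of_bicritical f hf
  obtain ⟨P, Q, hPQ, hset⟩ := Set.encard_eq_two.mp hf
  induction P using OnePoint.rec with
  | infty =>
    induction Q using OnePoint.rec with
    | infty => exact absurd rfl hPQ
    | coe q =>
      rw [Set.pair_comm] at hset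
      obtain ⟨h1, h2, h3⟩ := key_case1 f hd q hset
      exact ⟨q, ∞, OnePoint.coe_ne_infty q, hset, h1, h2, h3⟩
  | coe p =>
    induction Q using OnePoint.rec with
    | infty =>
      obtain ⟨h1, h2, h3⟩ := key_case1 f hd p hset
      exact ⟨p, ∞, hPQ, hset, h1, h2, h3⟩
    | coe q =>
      have hpq : p ≠ q := fun h => hPQ (by rw [h])
      obtain ⟨h1, h2, h3⟩ := key_case2 f hd p q hpq hset
      exact ⟨p, ((q : ℂ) : RSphere), hPQ, hset, h1, h2, h3⟩

end MobAux
namespace MobAux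

open RatMap RSphere

lemma pow_factor {g : Polynomial ℂ} {x : ℂ} {d : ℕ} (hg : g ≠ 0) (hle : g.natDegree ≤ d)
    (hmult : g.rootMultiplicity x = d) : ∃ α : ℂ, α ≠ 0 ∧ g = C α * (X - C x) ^ d := by
  have hdvd := Polynomial.pow_rootMultiplicity_dvd g x
  rw [hmult] at hdvd
  obtain ⟨u, hu⟩ := hdvd
  have hu0 : u ≠ 0 := fun h0 => hg (by rw [hu, h0, mul_zero])
  have hdeg : g.natDegree = d + u.natDegree := by
    rw [hu, Polynomial.natDegree_mul (pow_ne_zero _ (Polynomial.X_sub_C_ne_zero x)) hu0,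
      natDegree_pow_sub]
  have hun : u.natDegree = 0 := by omega
  obtain ⟨α, hα⟩ := Polynomial.natDegree_eq_zero.mp hun
  refine ⟨α, fun h0 => hu0 (by rw [← hα, h0, map_zero]), ?_⟩
  rw [hu, ← hα, mul_comm]

lemma fiber_structure_coe (f : RatMap) (hd : 1 ≤ f.degree) (p : ℂ)
    (hl : f.localDegree ((p : ℂ) : RSphere) = f.degree) :
    (f.eval ((p : ℂ) : RSphere) = ∞ ∧ ∃ α : ℂ, α ≠ 0 ∧ f.den = C α * (X - C p) ^ f.degree) ∨
    (∃ v α : ℂ, f.eval ((p : ℂ) : RSphere) = ((v : ℂ) : RSphere) ∧ α ≠ 0 ∧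
      f.num - C v * f.den = C α * (X - C p) ^ f.degree) := by
  rcases eq_or_ne (f.den.eval p) 0 with hb | hb
  · left
    have hev : f.eval ((p : ℂ) : RSphere) = ∞ := by rw [eval_coe, if_pos hb]
    refine ⟨hev, ?_⟩
    rw [localDegree_coe, hev, fiberPoly_infty] at hl
    exact pow_factor (den_ne_zero f hd) (le_max_right _ _) hl
  · right
    set v : ℂ := f.num.eval p / f.den.eval p with hv
    have hev : f.eval ((p : ℂ) : RSphere) = ((v : ℂ) : RSphere) := by rw [eval_coe, if_neg hb]
    rw [localDegree_coe, hev, fiberPoly_coe] at hl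
    obtain ⟨α, hα, hfac⟩ := pow_factor (num_sub_c_den_ne_zero f hd v)
      (fiberPoly_natDegree_le f ((v : ℂ) : RSphere)) hl
    exact ⟨v, α, hev, hα, hfac⟩

lemma fiber_structure_infty (f : RatMap) (hd : 1 ≤ f.degree)
    (hl : f.localDegree ∞ = f.degree) :
    (f.eval ∞ = ∞ ∧ ∃ α : ℂ, α ≠ 0 ∧ f.den = C α) ∨
    (∃ v α : ℂ, f.eval ∞ = ((v : ℂ) : RSphere) ∧ α ≠ 0 ∧ f.num - C v * f.den = C α) := by
  have hle := fiberPoly_natDegree_le f (f.eval ∞)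
  rw [localDegree_infty] at hl
  have hdeg0 : (f.fiberPoly (f.eval ∞)).natDegree = 0 := by omega
  obtain ⟨α, hα⟩ := Polynomial.natDegree_eq_zero.mp hdeg0
  have hα0 : α ≠ 0 := fun h0 => fiberPoly_ne_zero f hd (f.eval ∞) (by rw [← hα, h0, map_zero])
  cases hev : f.eval ∞ with
  | none =>
    left
    rw [hev] at hα
    exact ⟨rfl, α, hα0, hα.symm⟩
  | some v =>
    right
    rw [hev] at hα
    exact ⟨v, α, rfl, hα0, hα.symm⟩

lemma build1 (f : RatMap) {p q : ℂ} (hpq : p ≠ q) (hd : 1 ≤ f.degree) {a b c e : ℂ}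
    (hdet : a * e - b * c ≠ 0)
    (hnum : f.num = C a * (X - C p) ^ f.degree + C b * (X - C q) ^ f.degree)
    (hden : f.den = C c * (X - C p) ^ f.degree + C e * (X - C q) ^ f.degree) :
    ∃ G Gi L Li : RSphere → RSphere, IsMobius G ∧ IsMobius Gi ∧ IsMobius L ∧ IsMobius Li ∧
      G ∘ Gi = id ∧ Gi ∘ G = id ∧ L ∘ Li = id ∧ Li ∘ L = id ∧
      L ((p : ℂ) : RSphere) = ((0 : ℂ) : RSphere) ∧ L ((q : ℂ) : RSphere) = ∞ ∧
      f.eval = G ∘ powMap f.degree ∘ L := by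
  have hdetL : (1 : ℂ) * (-q) - (-p) * 1 ≠ 0 := by
    intro h0; exact hpq (by linear_combination h0)
  refine ⟨mApply a b c e, mApply e (-b) (-c) a, mApply 1 (-p) 1 (-q),
    mApply (-q) (-(-p)) (-1) 1, ⟨a, b, c, e, hdet, rfl⟩,
    ⟨e, -b, -c, a, by intro h0; exact hdet (by linear_combination h0), rfl⟩,
    ⟨1, -p, 1, -q, hdetL, rfl⟩,
    ⟨-q, -(-p), -1, 1, by intro h0; exact hpq (by linear_combination h0), rfl⟩,
    mApply_comp_inv hdet, mApply_inv_comp hdet, mApply_comp_inv hdetL, mApply_inv_comp hdetL,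
    ?_, ?_, fact1 f hpq hd hdet hnum hden⟩
  · rw [mApply_coe, if_neg (by intro h0; exact hpq (by linear_combination h0))]
    rw [OnePoint.coe_eq_coe]
    simp
  · rw [mApply_coe, if_pos (by ring)]

lemma build2 (f : RatMap) (p : ℂ) (hd : 1 ≤ f.degree) {a b c e : ℂ}
    (hdet : a * e - b * c ≠ 0)
    (hnum : f.num = C a * (X - C p) ^ f.degree + C b)
    (hden : f.den = C c * (X - C p) ^ f.degree + C e) :
    ∃ G Gi L Li : RSphere → RSphere, IsMobius G ∧ IsMobius Gi ∧ IsMobius L ∧ IsMobius Li ∧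
      G ∘ Gi = id ∧ Gi ∘ G = id ∧ L ∘ Li = id ∧ Li ∘ L = id ∧
      L ((p : ℂ) : RSphere) = ((0 : ℂ) : RSphere) ∧ L ∞ = ∞ ∧
      f.eval = G ∘ powMap f.degree ∘ L := by
  have hdetL : (1 : ℂ) * 1 - (-p) * 0 ≠ 0 := by norm_num
  refine ⟨mApply a b c e, mApply e (-b) (-c) a, mApply 1 (-p) 0 1,
    mApply 1 (-(-p)) (-0) 1, ⟨a, b, c, e, hdet, rfl⟩,
    ⟨e, -b, -c, a, by intro h0; exact hdet (by linear_combination h0), rfl⟩,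
    ⟨1, -p, 0, 1, hdetL, rfl⟩,
    ⟨1, -(-p), -0, 1, by intro h0; exact (one_ne_zero : (1:ℂ) ≠ 0) (by linear_combination h0), rfl⟩,
    mApply_comp_inv hdet, mApply_inv_comp hdet, mApply_comp_inv hdetL, mApply_inv_comp hdetL,
    ?_, ?_, fact2 f p hd hdet hnum hden⟩
  · rw [mApply_coe, if_neg (by norm_num), OnePoint.coe_eq_coe]
    simp
  · rw [mApply_infty, if_pos rfl]

theorem structure_theorem (f : RatMap) (hf : f.Bicritical) :
    ∃ (G Gi L Li : RSphere → RSphere) (P Q : RSphere),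
      IsMobius G ∧ IsMobius Gi ∧ IsMobius L ∧ IsMobius Li ∧
      G ∘ Gi = id ∧ Gi ∘ G = id ∧ L ∘ Li = id ∧ Li ∘ L = id ∧
      f.criticalPoints = {P, Q} ∧ P ≠ Q ∧ L P = ((0 : ℂ) : RSphere) ∧ L Q = ∞ ∧
      f.eval = G ∘ powMap f.degree ∘ L ∧ 2 ≤ f.degree := by
  obtain ⟨p, Q, hPQ, hset, hlp, hlQ, hd2⟩ := key f hf
  have hd1 : 1 ≤ f.degree := by omega
  have hd0 : f.degree ≠ 0 := by omega
  set d := f.degree with hdd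
  induction Q using OnePoint.rec with
  | coe q =>
    have hpq : p ≠ q := fun h => hPQ (by rw [h])
    have hpowq : ((q - p) ^ d : ℂ) ≠ 0 := pow_ne_zero _ (sub_ne_zero.mpr (Ne.symm hpq))
    have hpowp : ((p - q) ^ d : ℂ) ≠ 0 := pow_ne_zero _ (sub_ne_zero.mpr hpq)
    rcases fiber_structure_coe f hd1 p hlp with ⟨hevp, α, hα, hdenp⟩ | ⟨vp, α, hevp, hα, hfp⟩ <;>
      rcases fiber_structure_coe f hd1 q hlQ with ⟨hevq, β, hβ, hdenq⟩ | ⟨vq, β, hevq, hβ, hfq⟩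
    · -- both poles : impossible
      exfalso
      have hEq : C α * (X - C p) ^ d = C β * (X - C q) ^ d := by rw [← hdenp, ← hdenq]
      have := congrArg (Polynomial.eval p) hEq
      simp only [Polynomial.eval_mul, Polynomial.eval_C, Polynomial.eval_pow,
        Polynomial.eval_sub, Polynomial.eval_X, sub_self, zero_pow hd0, mul_zero] at this
      exact mul_ne_zero hβ hpowp this.symm
    · -- p pole, q finite value
      have hnum : f.num = C (vq * α) * (X - C p) ^ d + C β * (X - C q) ^ d := by
        rw [Polynomial.C_mul]
        linear_combination hfq + C vq * hdenp
      have hden : f.den = C α * (X - C p) ^ d + C (0 : ℂ) * (X - C q) ^ d := by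
        rw [Polynomial.C_0, zero_mul, add_zero]; exact hdenp
      obtain ⟨G, Gi, L, Li, h1, h1b, h2, h2b, h3, h4, h5, h6, h7, h8, h9⟩ :=
        build1 f hpq hd1 (show vq * α * 0 - β * α ≠ 0 by
          simpa using (mul_ne_zero hβ hα)) hnum hden
      exact ⟨G, Gi, L, Li, _, _, h1, h1b, h2, h2b, h3, h4, h5, h6, hset, hPQ, h7, h8, h9, hd2⟩
    · -- p finite value, q pole
      have hnum : f.num = C α * (X - C p) ^ d + C (vp * β) * (X - C q) ^ d := by
        rw [Polynomial.C_mul]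
        linear_combination hfp + C vp * hdenq
      have hden : f.den = C (0 : ℂ) * (X - C p) ^ d + C β * (X - C q) ^ d := by
        rw [Polynomial.C_0, zero_mul, zero_add]; exact hdenq
      obtain ⟨G, Gi, L, Li, h1, h1b, h2, h2b, h3, h4, h5, h6, h7, h8, h9⟩ :=
        build1 f hpq hd1 (show α * β - vp * β * 0 ≠ 0 by
          simpa using (mul_ne_zero hα hβ)) hnum hden
      exact ⟨G, Gi, L, Li, _, _, h1, h1b, h2, h2b, h3, h4, h5, h6, hset, hPQ, h7, h8, h9, hd2⟩
    · -- both finite values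
      have hvv : vp ≠ vq := by
        intro h0
        rw [h0] at hfp
        have hEq : C α * (X - C p) ^ d = C β * (X - C q) ^ d := by
          rw [← hfp, ← hfq]
        have := congrArg (Polynomial.eval p) hEq
        simp only [Polynomial.eval_mul, Polynomial.eval_C, Polynomial.eval_pow,
          Polynomial.eval_sub, Polynomial.eval_X, sub_self, zero_pow hd0, mul_zero] at this
        exact mul_ne_zero hβ hpowp this.symm
      set Δ : ℂ := vq - vp with hΔdef
      have hΔ : Δ ≠ 0 := sub_ne_zero.mpr (Ne.symm hvv)
      have hCΔ : (C Δ : Polynomial ℂ) ≠ 0 := fun h0 => hΔ (by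
        have := Polynomial.C_injective (R := ℂ) (h0.trans (map_zero C).symm)
        exact this)
      have hnum : f.num = C (vq * α / Δ) * (X - C p) ^ d + C (-(vp * β) / Δ) * (X - C q) ^ d := by
        apply mul_left_cancel₀ hCΔ
        rw [mul_add, ← mul_assoc, ← map_mul, ← mul_assoc, ← map_mul,
          (by field_simp; try ring : Δ * (vq * α / Δ) = vq * α),
          (by field_simp; try ring : Δ * (-(vp * β) / Δ) = -(vp * β)),
          hΔdef, Polynomial.C_sub, Polynomial.C_neg, Polynomial.C_mul, Polynomial.C_mul]
        linear_combination C vq * hfp - C vp * hfq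
      have hden : f.den = C (α / Δ) * (X - C p) ^ d + C (-β / Δ) * (X - C q) ^ d := by
        apply mul_left_cancel₀ hCΔ
        rw [mul_add, ← mul_assoc, ← map_mul, ← mul_assoc, ← map_mul,
          (by field_simp; try ring : Δ * (α / Δ) = α),
          (by field_simp; try ring : Δ * (-β / Δ) = -β),
          hΔdef, Polynomial.C_sub, Polynomial.C_neg]
        linear_combination hfp - hfq
      have hdet : vq * α / Δ * (-β / Δ) - -(vp * β) / Δ * (α / Δ) ≠ 0 := by
        have heq : vq * α / Δ * (-β / Δ) - -(vp * β) / Δ * (α / Δ)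
            = -(α * β) / Δ := by
          field_simp
          ring
        rw [heq]
        exact div_ne_zero (neg_ne_zero.mpr (mul_ne_zero hα hβ)) hΔ
      obtain ⟨G, Gi, L, Li, h1, h1b, h2, h2b, h3, h4, h5, h6, h7, h8, h9⟩ :=
        build1 f hpq hd1 hdet hnum hden
      exact ⟨G, Gi, L, Li, _, _, h1, h1b, h2, h2b, h3, h4, h5, h6, hset, hPQ, h7, h8, h9, hd2⟩
  | infty =>
    rcases fiber_structure_coe f hd1 p hlp with ⟨hevp, α, hα, hdenp⟩ | ⟨vp, α, hevp, hα, hfp⟩ <;>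
      rcases fiber_structure_infty f hd1 hlQ with ⟨hevq, β, hβ, hdenq⟩ | ⟨vq, β, hevq, hβ, hfq⟩
    · -- p pole and ∞ pole : impossible
      exfalso
      have hEq : C α * (X - C p) ^ d = C β := by rw [← hdenp, ← hdenq]
      have := congrArg (fun g => Polynomial.coeff g d) hEq
      rw [Polynomial.coeff_C_mul, Polynomial.coeff_C, if_neg hd0] at this
      have hcoeff : ((X - C p) ^ d : Polynomial ℂ).coeff d = 1 := by
        have := (monic_pow_sub p d).coeff_natDegree
        rwa [natDegree_pow_sub] at this
      rw [hcoeff, mul_one] at this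
      exact hα this
    · -- p pole, f(∞) = vq
      have hnum : f.num = C (vq * α) * (X - C p) ^ d + C β := by
        rw [Polynomial.C_mul]
        linear_combination hfq + C vq * hdenp
      have hden : f.den = C α * (X - C p) ^ d + C (0 : ℂ) := by
        rw [Polynomial.C_0, add_zero]; exact hdenp
      obtain ⟨G, Gi, L, Li, h1, h1b, h2, h2b, h3, h4, h5, h6, h7, h8, h9⟩ :=
        build2 f p hd1 (show vq * α * 0 - β * α ≠ 0 by simpa using (mul_ne_zero hβ hα)) hnum hden
      exact ⟨G, Gi, L, Li, _, _, h1, h1b, h2, h2b, h3, h4, h5, h6, hset, hPQ, h7, h8, h9, hd2⟩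
    · -- p finite value, ∞ pole
      have hnum : f.num = C α * (X - C p) ^ d + C (vp * β) := by
        rw [Polynomial.C_mul]
        linear_combination hfp + C vp * hdenq
      have hden : f.den = C (0 : ℂ) * (X - C p) ^ d + C β := by
        rw [Polynomial.C_0, zero_mul, zero_add]; exact hdenq
      obtain ⟨G, Gi, L, Li, h1, h1b, h2, h2b, h3, h4, h5, h6, h7, h8, h9⟩ :=
        build2 f p hd1 (show α * β - vp * β * 0 ≠ 0 by simpa using (mul_ne_zero hα hβ)) hnum hden
      exact ⟨G, Gi, L, Li, _, _, h1, h1b, h2, h2b, h3, h4, h5, h6, hset, hPQ, h7, h8, h9, hd2⟩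
    · -- both finite values
      have hvv : vp ≠ vq := by
        intro h0
        rw [h0] at hfp
        have hEq : C α * (X - C p) ^ d = C β := by rw [← hfp, ← hfq]
        have := congrArg (fun g => Polynomial.coeff g d) hEq
        rw [Polynomial.coeff_C_mul, Polynomial.coeff_C, if_neg hd0] at this
        have hcoeff : ((X - C p) ^ d : Polynomial ℂ).coeff d = 1 := by
          have := (monic_pow_sub p d).coeff_natDegree
          rwa [natDegree_pow_sub] at this
        rw [hcoeff, mul_one] at this
        exact hα this
      set Δ : ℂ := vq - vp with hΔdef
      have hΔ : Δ ≠ 0 := sub_ne_zero.mpr (Ne.symm hvv)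
      have hCΔ : (C Δ : Polynomial ℂ) ≠ 0 := fun h0 => hΔ (by
        have := Polynomial.C_injective (R := ℂ) (h0.trans (map_zero C).symm)
        exact this)
      have hnum : f.num = C (vq * α / Δ) * (X - C p) ^ d + C (-(vp * β) / Δ) := by
        apply mul_left_cancel₀ hCΔ
        rw [mul_add, ← mul_assoc, ← map_mul, ← map_mul,
          (by field_simp; try ring : Δ * (vq * α / Δ) = vq * α),
          (by field_simp; try ring : Δ * (-(vp * β) / Δ) = -(vp * β)),
          hΔdef, Polynomial.C_sub, Polynomial.C_neg, Polynomial.C_mul, Polynomial.C_mul]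
        linear_combination C vq * hfp - C vp * hfq
      have hden : f.den = C (α / Δ) * (X - C p) ^ d + C (-β / Δ) := by
        apply mul_left_cancel₀ hCΔ
        rw [mul_add, ← mul_assoc, ← map_mul, ← map_mul,
          (by field_simp; try ring : Δ * (α / Δ) = α),
          (by field_simp; try ring : Δ * (-β / Δ) = -β),
          hΔdef, Polynomial.C_sub, Polynomial.C_neg]
        linear_combination hfp - hfq
      have hdet : vq * α / Δ * (-β / Δ) - -(vp * β) / Δ * (α / Δ) ≠ 0 := by
        have heq : vq * α / Δ * (-β / Δ) - -(vp * β) / Δ * (α / Δ) = -(α * β) / Δ := by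
          field_simp
          ring
        rw [heq]
        exact div_ne_zero (neg_ne_zero.mpr (mul_ne_zero hα hβ)) hΔ
      obtain ⟨G, Gi, L, Li, h1, h1b, h2, h2b, h3, h4, h5, h6, h7, h8, h9⟩ :=
        build2 f p hd1 hdet hnum hden
      exact ⟨G, Gi, L, Li, _, _, h1, h1b, h2, h2b, h3, h4, h5, h6, hset, hPQ, h7, h8, h9, hd2⟩

end MobAux
namespace MobAux

open RatMap RSphere

lemma f_surjective (f : RatMap) {G Gi L Li : RSphere → RSphere}
    (hd1 : 1 ≤ f.degree) (hGGi : G ∘ Gi = id) (hLLi : L ∘ Li = id)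
    (heval : f.eval = G ∘ powMap f.degree ∘ L) :
    Function.Surjective f.eval := by
  intro w
  obtain ⟨t, ht⟩ := powMap_surjective hd1 (Gi w)
  refine ⟨Li t, ?_⟩
  rw [heval]
  simp only [Function.comp_apply]
  have h1 := congrFun hLLi t
  simp only [Function.comp_apply, id_eq] at h1
  rw [h1, ht]
  have h2 := congrFun hGGi w
  simp only [Function.comp_apply, id_eq] at h2
  exact h2

lemma assemble (f : RatMap) {G Gi L Li m phi : RSphere → RSphere} {P Q : RSphere}
    (hd0 : f.degree ≠ 0)
    (hGm : IsMobius G) (hGim : IsMobius Gi) (hmm : IsMobius m)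
    (hGGi : G ∘ Gi = id) (hGiG : Gi ∘ G = id) (hLiL : Li ∘ L = id)
    (hset : f.criticalPoints = {P, Q}) (hLP : L P = ((0 : ℂ) : RSphere)) (hLQ : L Q = ∞)
    (heval : f.eval = G ∘ powMap f.degree ∘ L)
    (hcomm : powMap f.degree ∘ (L ∘ phi ∘ Li) = m ∘ powMap f.degree)
    (hpair : ({m ((0 : ℂ) : RSphere), m ∞} : Set RSphere) = {((0 : ℂ) : RSphere), ∞}) :
    IsMobius (G ∘ m ∘ Gi) ∧ (G ∘ m ∘ Gi) ∘ f.eval = f.eval ∘ phi ∧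
      (G ∘ m ∘ Gi) '' f.criticalValues = f.criticalValues := by
  have hpow0 : powMap f.degree ((0 : ℂ) : RSphere) = ((0 : ℂ) : RSphere) := by
    rw [powMap_coe, zero_pow hd0]
  refine ⟨hGm.comp (hmm.comp hGim), ?_, ?_⟩
  · funext z
    simp only [Function.comp_apply]
    rw [heval]
    simp only [Function.comp_apply]
    have h0 := congrFun hGiG (powMap f.degree (L z))
    simp only [Function.comp_apply, id_eq] at h0
    rw [h0]
    have h1 := congrFun hcomm (L z)
    simp only [Function.comp_apply] at h1
    have h2 := congrFun hLiL z
    simp only [Function.comp_apply, id_eq] at h2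
    rw [h2] at h1
    rw [← h1]
  · have hfP : f.eval P = G ((0 : ℂ) : RSphere) := by
      rw [heval]
      simp only [Function.comp_apply]
      rw [hLP, hpow0]
    have hfQ : f.eval Q = G ∞ := by
      rw [heval]
      simp only [Function.comp_apply]
      rw [hLQ, powMap_infty]
    rw [RatMap.criticalValues, hset, Set.image_pair, hfP, hfQ, Set.image_pair]
    have hμ0 : (G ∘ m ∘ Gi) (G ((0 : ℂ) : RSphere)) = G (m ((0 : ℂ) : RSphere)) := by
      simp only [Function.comp_apply]
      have h0 := congrFun hGiG ((0 : ℂ) : RSphere)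
      simp only [Function.comp_apply, id_eq] at h0
      rw [h0]
    have hμinf : (G ∘ m ∘ Gi) (G ∞) = G (m ∞) := by
      simp only [Function.comp_apply]
      have h0 := congrFun hGiG (∞ : RSphere)
      simp only [Function.comp_apply, id_eq] at h0
      rw [h0]
    rw [hμ0, hμinf, ← Set.image_pair G (m ((0 : ℂ) : RSphere)) (m ∞), hpair,
      Set.image_pair]

end MobAux
open RSphere in
/-- Let `f` be a bicritical rational map with critical point set `C_f`, and `φ` a Möbius
transformation with `φ(C_f) = C_f`. Then there is a unique Möbius transformation `μ` with
`μ ∘ f = f ∘ φ`; furthermore `μ(V_f) = V_f`. -/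
theorem exists_unique_semiconjugate_mobius (f : RatMap) (hf : f.Bicritical)
    (phi : RSphere → RSphere) (hphi : IsMobius phi)
    (hC : phi '' f.criticalPoints = f.criticalPoints) :
    ∃ mu : RSphere → RSphere,
      (IsMobius mu ∧ mu ∘ f.eval = f.eval ∘ phi ∧
        mu '' f.criticalValues = f.criticalValues) ∧
      ∀ mu' : RSphere → RSphere, IsMobius mu' → mu' ∘ f.eval = f.eval ∘ phi → mu' = mu := by
  obtain ⟨G, Gi, L, Li, P, Q, hGm, hGim, hLm, hLim, hGGi, hGiG, hLLi, hLiL, hset, hPQ,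
    hLP, hLQ, heval, hd2⟩ := MobAux.structure_theorem f hf
  have hd1 : 1 ≤ f.degree := by omega
  have hd0 : f.degree ≠ 0 := by omega
  -- two-sided inverse of phi
  obtain ⟨pa, pb, pc, pd, hpdet, hphieq⟩ := hphi
  have hphim : IsMobius phi := ⟨pa, pb, pc, pd, hpdet, hphieq⟩
  have hphii : phi ∘ mApply pd (-pb) (-pc) pa = id := by
    rw [hphieq]; exact mApply_comp_inv hpdet
  have hiphi : mApply pd (-pb) (-pc) pa ∘ phi = id := by
    rw [hphieq]; exact mApply_inv_comp hpdet
  have hinj : Function.Injective phi := by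
    intro x y hxy
    have h1 := congrFun hiphi x
    have h2 := congrFun hiphi y
    simp only [Function.comp_apply, id_eq] at h1 h2
    rw [← h1, ← h2, hxy]
  -- phi permutes {P, Q}
  rw [hset, Set.image_pair] at hC
  have hperm : (phi P = P ∧ phi Q = Q) ∨ (phi P = Q ∧ phi Q = P) := by
    have h1 : phi P ∈ ({P, Q} : Set RSphere) := by
      rw [← hC]; exact Set.mem_insert _ _
    have h2 : phi Q ∈ ({P, Q} : Set RSphere) := by
      rw [← hC]; exact Set.mem_insert_of_mem _ rfl
    simp only [Set.mem_insert_iff, Set.mem_singleton_iff] at h1 h2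
    rcases h1 with h1 | h1
    · refine Or.inl ⟨h1, ?_⟩
      rcases h2 with h2 | h2
      · exact absurd (hinj (h1.trans h2.symm)) hPQ
      · exact h2
    · refine Or.inr ⟨h1, ?_⟩
      rcases h2 with h2 | h2
      · exact h2
      · exact absurd (hinj (h1.trans h2.symm)) hPQ
  -- the conjugated map psi = L ∘ phi ∘ Li permutes {0, ∞}
  have hψm : IsMobius (L ∘ phi ∘ Li) := hLm.comp (hphim.comp hLim)
  have hLi0 : Li ((0 : ℂ) : RSphere) = P := by
    have h1 := congrFun hLiL P
    simp only [Function.comp_apply, id_eq] at h1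
    rw [← hLP, h1]
  have hLiinf : Li ∞ = Q := by
    have h1 := congrFun hLiL Q
    simp only [Function.comp_apply, id_eq] at h1
    rw [← hLQ, h1]
  have hψ0 : (L ∘ phi ∘ Li) ((0 : ℂ) : RSphere) = L (phi P) := by
    simp only [Function.comp_apply, hLi0]
  have hψinf : (L ∘ phi ∘ Li) ∞ = L (phi Q) := by
    simp only [Function.comp_apply, hLiinf]
  obtain ⟨lam, hlam, hform⟩ := mobius_fix_pair hψm (by
    rcases hperm with ⟨e1, e2⟩ | ⟨e1, e2⟩
    · exact Or.inl ⟨by rw [hψ0, e1, hLP], by rw [hψinf, e2, hLQ]⟩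
    · exact Or.inr ⟨by rw [hψ0, e1, hLQ], by rw [hψinf, e2, hLP]⟩)
  -- build m with powMap ∘ psi = m ∘ powMap and m permuting {0, ∞}
  obtain ⟨m, hmm, hcomm, hpair⟩ :
      ∃ m : RSphere → RSphere, IsMobius m ∧
        RatMap.powMap f.degree ∘ (L ∘ phi ∘ Li) = m ∘ RatMap.powMap f.degree ∧
        ({m ((0 : ℂ) : RSphere), m ∞} : Set RSphere) = {((0 : ℂ) : RSphere), ∞} := by
    rcases hform with hform | hform
    · refine ⟨mApply (lam ^ f.degree) 0 0 1,
        ⟨lam ^ f.degree, 0, 0, 1, by simpa using pow_ne_zero f.degree hlam, rfl⟩,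
        by rw [hform]; exact powMap_comp_scale f.degree lam, ?_⟩
      have hm0 : mApply (lam ^ f.degree) 0 0 1 ((0 : ℂ) : RSphere) = ((0 : ℂ) : RSphere) := by
        rw [mApply_coe, if_neg (by norm_num), OnePoint.coe_eq_coe]
        simp
      have hminf : mApply (lam ^ f.degree) 0 0 1 ∞ = ∞ := by
        rw [mApply_infty, if_pos rfl]
      rw [hm0, hminf]
    · refine ⟨mApply 0 (lam ^ f.degree) 1 0,
        ⟨0, lam ^ f.degree, 1, 0, by simpa using pow_ne_zero f.degree hlam, rfl⟩,
        by rw [hform]; exact powMap_comp_invScale hd1 lam, ?_⟩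
      have hm0 : mApply 0 (lam ^ f.degree) 1 0 ((0 : ℂ) : RSphere) = ∞ := by
        rw [mApply_coe, if_pos (by ring)]
      have hminf : mApply 0 (lam ^ f.degree) 1 0 ∞ = ((0 : ℂ) : RSphere) := by
        rw [mApply_infty, if_neg one_ne_zero, zero_div]
      rw [hm0, hminf, Set.pair_comm]
  obtain ⟨hμm, hμsemi, hμV⟩ := MobAux.assemble f hd0 hGm hGim hmm hGGi hGiG hLiL hset
    hLP hLQ heval hcomm hpair
  refine ⟨G ∘ m ∘ Gi, ⟨hμm, hμsemi, hμV⟩, ?_⟩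
  intro mu' _ hmu'
  funext w
  obtain ⟨z, hz⟩ := MobAux.f_surjective f hd1 hGGi hLLi heval w
  have h1 := congrFun hmu' z
  have h2 := congrFun hμsemi z
  simp only [Function.comp_apply] at h1 h2
  rw [← hz, h1]
  exact h2.symm
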